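/- arXiv:1610.03611 — 4 statements merged into one kernel-verified Lean document; each statement's English description precedes it below -/
import Mathlib

section
/- Let K ≥ 1, let q₁,…,q_K ∈ [0,M₁] and μ₁,…,μ_K > 0 with Σ_{j=1}^K μ_j = 1, let θ ∈ (0,1), p ∈ (0,1), λ > 0, and define H_S(x) = (1−θ)Σ_{j=1}^K μ_j x^{q_j} and H_V(x) = Σ_{j=1}^K μ_j q_j − (1−θ)Σ_{j=1}^K μ_j q_j x^{q_j} + (log x)/(pλ) for x > 0. Suppose ψ : [0,T] → (0,∞) is differentiable with ψ(0) = 1 and ψ'(t) = −pλ ψ(t) H_V(ψ(t)) for all t ∈ [0,T], and suppose (s(·,1),…,s(·,K), v) : [0,T] → ℝ^{K+1} is differentiable and satisfies s'(t,i) = −pλ v(t) q_i s(t,i) for 1 ≤ i ≤ K, v'(t) = −v(t) + pλ v(t) Σ_{i=1}^K q_i² s(t,i), with initial conditions s(0,i) = (1−θ)μ_i for 1 ≤ i ≤ K and v(0) = θ Σ_{i=1}^K q_i μ_i. Then for every t ∈ [0,T], v(t) = H_V(ψ(t)) and Σ_{i=1}^K s(t,i) = H_S(ψ(t)). -/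
/-!
Write `c = pλ`. Along a solution of `ψ' = -c ψ H_V(ψ)` every power satisfies
`(ψ^r)' = -c r H_V(ψ) ψ^r` and `(log ψ)' / c = -H_V(ψ)`, so the curve
`t ↦ (((1-θ) μ_i ψ(t)^{q_i})_i, H_V(ψ(t)))` solves system (3.7) and has the same initial
value as `(s, v)`. The vector field of (3.7) is polynomial, hence locally Lipschitz, so the two
solutions coincide by uniqueness for ODEs.
-/

open Set

theorem ODE_solution_unique_of_locallyLipschitz {E : Type*} [NormedAddCommGroup E]
    [NormedSpace ℝ E] {f : E → E} (hf : LocallyLipschitz f) {x y : ℝ → E} {a b : ℝ}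
    (hx : ∀ t ∈ Icc a b, HasDerivAt x (f (x t)) t)
    (hy : ∀ t ∈ Icc a b, HasDerivAt y (f (y t)) t) (ha : x a = y a) :
    EqOn x y (Icc a b) := by
  have hxc := HasDerivAt.continuousOn hx
  have hyc := HasDerivAt.continuousOn hy
  obtain ⟨K, hK⟩ := hf.locallyLipschitzOn.exists_lipschitzOnWith_of_compact
    ((isCompact_Icc.image_of_continuousOn hxc).union (isCompact_Icc.image_of_continuousOn hyc))
  exact ODE_solution_unique_of_mem_Icc_right (v := fun _ => f) (fun _ _ => hK) hxc
    (fun t ht => (hx t (Ico_subset_Icc_self ht)).hasDerivWithinAt)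
    (fun t ht => Or.inl (mem_image_of_mem x (Ico_subset_Icc_self ht))) hyc
    (fun t ht => (hy t (Ico_subset_Icc_self ht)).hasDerivWithinAt)
    (fun t ht => Or.inr (mem_image_of_mem y (Ico_subset_Icc_self ht))) ha

theorem HasDerivAt.rpow_const_of_eq_self_mul {ψ : ℝ → ℝ} {g t : ℝ}
    (hψ : HasDerivAt ψ (ψ t * g) t) (hpos : 0 < ψ t) (r : ℝ) :
    HasDerivAt (fun u => ψ u ^ r) (r * g * ψ t ^ r) t := by
  convert hψ.rpow_const (p := r) (Or.inl hpos.ne') using 1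
  rw [Real.rpow_sub hpos, Real.rpow_one]
  field_simp

section SIR

variable {K : ℕ} (q : Fin K → ℝ) (c : ℝ)

def sirField (x : (Fin K → ℝ) × ℝ) : (Fin K → ℝ) × ℝ :=
  (fun i => -c * x.2 * q i * x.1 i, -x.2 + c * x.2 * ∑ i, q i ^ 2 * x.1 i)

theorem contDiff_sirField {n : WithTop ℕ∞} : ContDiff ℝ n (sirField q c) := by
  unfold sirField
  fun_prop

variable (a : Fin K → ℝ) (b : ℝ)

/-- For `a = (1-θ) μ`, `b = Σ μ_j q_j` and `c = pλ` this is
`x ↦ (((1-θ) μ_i x^{q_i})_i, H_V(x))`, whose first component sums to `H_S(x)`. -/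
noncomputable def sirProfile (x : ℝ) : (Fin K → ℝ) × ℝ :=
  (fun i => a i * x ^ q i, b - ∑ j, q j * a j * x ^ q j + Real.log x / c)

theorem hasDerivAt_sirProfile_comp {ψ : ℝ → ℝ} {t : ℝ} (hc : c ≠ 0) (hpos : 0 < ψ t)
    (hψ : HasDerivAt ψ (-c * ψ t * (sirProfile q c a b (ψ t)).2) t) :
    HasDerivAt (fun u => sirProfile q c a b (ψ u))
      (sirField q c (sirProfile q c a b (ψ t))) t := by
  have hpow := (hψ.congr_deriv (by ring : _ = ψ t * (-c * (sirProfile q c a b (ψ t)).2)))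
    |>.rpow_const_of_eq_self_mul hpos
  refine (hasDerivAt_pi.2 fun i => ((hpow (q i)).const_mul (a i)).congr_deriv ?_).prodMk ?_
  · simp only [sirProfile]
    ring
  · have hsum :=
      HasDerivAt.fun_sum (u := Finset.univ) fun j _ => (hpow (q j)).const_mul (q j * a j)
    refine ((hsum.const_sub b).add ((hψ.log hpos.ne').div_const c)).congr_deriv ?_
    generalize (sirProfile q c a b (ψ t)).2 = w
    have hlog : -c * ψ t * w / ψ t / c = -w := by field_simp
    rw [hlog, Finset.mul_sum, ← Finset.sum_neg_distrib, add_comm]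
    exact congrArg _ (Finset.sum_congr rfl fun i _ => by simp only [sirProfile]; ring)

end SIR

theorem sir_lln_ode_identity_general
    (K : ℕ)
    (q μ : Fin K → ℝ)
    (θ p lam : ℝ) (hp : p ∈ Set.Ioo (0 : ℝ) 1)
    (hlam : 0 < lam)
    (T : ℝ)
    (HS HV : ℝ → ℝ)
    (hHS : ∀ x > (0 : ℝ), HS x = (1 - θ) * ∑ j, μ j * x ^ (q j))
    (hHV : ∀ x > (0 : ℝ), HV x =
      (∑ j, μ j * q j) - (1 - θ) * (∑ j, μ j * q j * x ^ (q j))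
        + Real.log x / (p * lam))
    (ψ : ℝ → ℝ) (hψpos : ∀ t ∈ Set.Icc 0 T, 0 < ψ t) (hψ0 : ψ 0 = 1)
    (hψ' : ∀ t ∈ Set.Icc 0 T,
      HasDerivAt ψ (-(p * lam) * ψ t * HV (ψ t)) t)
    (s : ℝ → Fin K → ℝ) (v : ℝ → ℝ)
    (hs' : ∀ t ∈ Set.Icc 0 T, ∀ i,
      HasDerivAt (fun u => s u i) (-(p * lam) * v t * q i * s t i) t)
    (hv' : ∀ t ∈ Set.Icc 0 T,
      HasDerivAt v (-v t + p * lam * v t * ∑ i, (q i) ^ 2 * s t i) t)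
    (hs0 : ∀ i, s 0 i = (1 - θ) * μ i)
    (hv0 : v 0 = θ * ∑ i, q i * μ i) :
    ∀ t ∈ Set.Icc 0 T, v t = HV (ψ t) ∧ (∑ i, s t i) = HS (ψ t) := by
  set Φ := sirProfile q (p * lam) (fun i => (1 - θ) * μ i) (∑ j, μ j * q j)
  have hc : p * lam ≠ 0 := (mul_pos hp.1 hlam).ne'
  have hΦ_HV : ∀ x > (0 : ℝ), (Φ x).2 = HV x := fun x hx => by
    rw [hHV x hx, Finset.mul_sum]
    simp only [Φ, sirProfile]
    congr 2
    exact Finset.sum_congr rfl fun j _ => by ring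
  have hsol : ∀ t ∈ Icc 0 T,
      HasDerivAt (fun u => (s u, v u)) (sirField q (p * lam) (s t, v t)) t :=
    fun t ht => (hasDerivAt_pi.2 (hs' t ht)).prodMk (hv' t ht)
  have hΦsol : ∀ t ∈ Icc 0 T,
      HasDerivAt (fun u => Φ (ψ u)) (sirField q (p * lam) (Φ (ψ t))) t :=
    fun t ht => hasDerivAt_sirProfile_comp q _ _ _ hc (hψpos t ht)
      (by rw [hΦ_HV _ (hψpos t ht)]; exact hψ' t ht)
  have hinit : (s 0, v 0) = Φ (ψ 0) := by
    simp only [Φ, sirProfile, hψ0, Real.one_rpow, mul_one, Real.log_one, zero_div, add_zero,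
      Prod.mk.injEq, hv0]
    refine ⟨funext hs0, ?_⟩
    rw [Finset.mul_sum, ← Finset.sum_sub_distrib]
    exact Finset.sum_congr rfl fun j _ => by ring
  intro t ht
  have heq : (s t, v t) = Φ (ψ t) :=
    ODE_solution_unique_of_locallyLipschitz (contDiff_sirField q (p * lam)).locallyLipschitz
      hsol hΦsol hinit ht
  simp only [Prod.ext_iff] at heq
  refine ⟨heq.2.trans (hΦ_HV _ (hψpos t ht)), ?_⟩
  rw [heq.1, hHS _ (hψpos t ht), Finset.mul_sum]
  exact Finset.sum_congr rfl fun i _ => by simp only [Φ, sirProfile]; ring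

theorem sir_lln_ode_identity
    (K : ℕ) (hK : 1 ≤ K) (M₁ : ℝ)
    (q μ : Fin K → ℝ) (hq : ∀ j, q j ∈ Set.Icc (0 : ℝ) M₁)
    (hμ : ∀ j, 0 < μ j) (hμsum : ∑ j, μ j = 1)
    (θ p lam : ℝ) (hθ : θ ∈ Set.Ioo (0 : ℝ) 1) (hp : p ∈ Set.Ioo (0 : ℝ) 1)
    (hlam : 0 < lam)
    (T : ℝ) (hT : 0 ≤ T)
    (HS HV : ℝ → ℝ)
    (hHS : ∀ x > (0 : ℝ), HS x = (1 - θ) * ∑ j, μ j * x ^ (q j))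
    (hHV : ∀ x > (0 : ℝ), HV x =
      (∑ j, μ j * q j) - (1 - θ) * (∑ j, μ j * q j * x ^ (q j))
        + Real.log x / (p * lam))
    (ψ : ℝ → ℝ) (hψpos : ∀ t ∈ Set.Icc 0 T, 0 < ψ t) (hψ0 : ψ 0 = 1)
    (hψ' : ∀ t ∈ Set.Icc 0 T,
      HasDerivAt ψ (-(p * lam) * ψ t * HV (ψ t)) t)
    (s : ℝ → Fin K → ℝ) (v : ℝ → ℝ)
    (hs' : ∀ t ∈ Set.Icc 0 T, ∀ i,
      HasDerivAt (fun u => s u i) (-(p * lam) * v t * q i * s t i) t)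
    (hv' : ∀ t ∈ Set.Icc 0 T,
      HasDerivAt v (-v t + p * lam * v t * ∑ i, (q i) ^ 2 * s t i) t)
    (hs0 : ∀ i, s 0 i = (1 - θ) * μ i)
    (hv0 : v 0 = θ * ∑ i, q i * μ i) :
    ∀ t ∈ Set.Icc 0 T, v t = HV (ψ t) ∧ (∑ i, s t i) = HS (ψ t) :=
  sir_lln_ode_identity_general K q μ θ p lam hp hlam T HS HV hHS hHV ψ hψpos hψ0 hψ' s v hs' hv' hs0
    hv0
end

section
/- Fix p ∈ (0,1) and c, d > 0 with c + d ≤ 1. For each n ≥ 1, let {U_{ij} : 0 ≤ i < j ≤ n−1} be independent Bernoulli(p) random variables (set U_{ji} = U_{ij}). For disjoint subsets C, D of {0,…,n−1}, let α(C,D) = Σ_{i∈C, j∈D} U_{ij}, and define β(c,d,n) as the maximum of |α(C,D) − |C|·|D|·p| over all pairs of disjoint subsets C, D of {0,…,n−1} with |C| ≥ cn and |D| ≥ dn. Then β(c,d,n)/n² → 0 in probability as n → ∞, i.e., for every ε > 0, P(β(c,d,n) ≥ εn²) → 0 as n → ∞. -/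
/-! For fixed disjoint `C, D`, the deviation `α(C, D) - |C||D|p` is a sum of at most `n²`
independent centred Bernoulli variables, one per edge between `C` and `D`, so Hoeffding's
inequality bounds the probability that it exceeds `εn²` by `2 exp(-2ε²n²)`. A union bound over
the at most `4ⁿ` pairs `(C, D)` costs a factor `4ⁿ`, which this Gaussian tail in `n` absorbs. -/

open MeasureTheory ProbabilityTheory Filter Finset Real
open scoped NNReal

namespace ProbabilityTheory.HasSubgaussianMGF

variable {Ω : Type*} [MeasurableSpace Ω] {μ : Measure Ω} {X : Ω → ℝ} {c : ℝ≥0}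

lemma mono (h : HasSubgaussianMGF X c μ) {c' : ℝ≥0} (hc : c ≤ c') :
    HasSubgaussianMGF X c' μ where
  integrable_exp_mul := h.integrable_exp_mul
  mgf_le t := (h.mgf_le t).trans (exp_le_exp.mpr (by gcongr))

lemma measureReal_abs_ge_le [IsFiniteMeasure μ] (h : HasSubgaussianMGF X c μ) {ε : ℝ}
    (hε : 0 ≤ ε) :
    μ.real {ω | ε ≤ |X ω|} ≤ 2 * exp (-ε ^ 2 / (2 * c)) := by
  have hsplit : {ω | ε ≤ |X ω|} ⊆ {ω | ε ≤ X ω} ∪ {ω | ε ≤ (-X) ω} := fun ω hω ↦ by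
    rcases le_abs.mp (show ε ≤ |X ω| from hω) with h | h
    exacts [Or.inl h, Or.inr h]
  calc μ.real {ω | ε ≤ |X ω|}
      ≤ μ.real {ω | ε ≤ X ω} + μ.real {ω | ε ≤ (-X) ω} :=
        (measureReal_mono hsplit).trans (measureReal_union_le _ _)
    _ ≤ exp (-ε ^ 2 / (2 * c)) + exp (-ε ^ 2 / (2 * c)) :=
        add_le_add (h.measure_ge_le hε) (h.neg.measure_ge_le hε)
    _ = 2 * exp (-ε ^ 2 / (2 * c)) := by ring

end ProbabilityTheory.HasSubgaussianMGF

section Bernoulli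

variable {Ω : Type*} [MeasurableSpace Ω] {μ : Measure Ω} [IsProbabilityMeasure μ] {X : Ω → ℝ}
  {p : ℝ}

lemma ae_eq_zero_or_eq_one_of_bernoulli (hX : Measurable X) (hp0 : 0 ≤ p) (hp1 : p ≤ 1)
    (h1 : μ {ω | X ω = 1} = ENNReal.ofReal p) (h0 : μ {ω | X ω = 0} = ENNReal.ofReal (1 - p)) :
    ∀ᵐ ω ∂μ, X ω = 1 ∨ X ω = 0 := by
  have hdisj : Disjoint {ω | X ω = 1} {ω | X ω = 0} :=
    Set.disjoint_left.mpr fun ω h1 h0 ↦ one_ne_zero (h1.symm.trans h0)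
  have hA : MeasurableSet {ω | X ω = 1} := measurableSet_eq_fun hX measurable_const
  have hB : MeasurableSet {ω | X ω = 0} := measurableSet_eq_fun hX measurable_const
  rw [ae_iff_measure_eq (by simpa only [Set.ofPred_or] using (hA.union hB).nullMeasurableSet),
    Set.ofPred_or, measure_union hdisj hB, h1, h0,
    ← ENNReal.ofReal_add hp0 (by linarith), add_sub_cancel, ENNReal.ofReal_one, measure_univ]

lemma integral_eq_of_bernoulli (hX : Measurable X) (hp0 : 0 ≤ p) (hp1 : p ≤ 1)
    (h1 : μ {ω | X ω = 1} = ENNReal.ofReal p) (h0 : μ {ω | X ω = 0} = ENNReal.ofReal (1 - p)) :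
    μ[X] = p := by
  have hind : X =ᵐ[μ] {ω | X ω = 1}.indicator 1 := by
    filter_upwards [ae_eq_zero_or_eq_one_of_bernoulli hX hp0 hp1 h1 h0] with ω hω
    rcases hω with hω | hω <;> simp [hω]
  rw [integral_congr_ae hind, integral_indicator_one (measurableSet_eq_fun hX measurable_const),
    measureReal_def, h1, ENNReal.toReal_ofReal hp0]

lemma hasSubgaussianMGF_sub_of_bernoulli (hX : Measurable X) (hp0 : 0 ≤ p) (hp1 : p ≤ 1)
    (h1 : μ {ω | X ω = 1} = ENNReal.ofReal p) (h0 : μ {ω | X ω = 0} = ENNReal.ofReal (1 - p)) :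
    HasSubgaussianMGF (fun ω ↦ X ω - p) (1 / 4) μ := by
  have hIcc : ∀ᵐ ω ∂μ, X ω ∈ Set.Icc (0 : ℝ) 1 := by
    filter_upwards [ae_eq_zero_or_eq_one_of_bernoulli hX hp0 hp1 h1 h0] with ω hω
    rcases hω with hω | hω <;> simp [hω]
  have h := hasSubgaussianMGF_of_mem_Icc hX.aemeasurable hIcc
  rw [integral_eq_of_bernoulli hX hp0 hp1 h1 h0] at h
  convert h using 1
  norm_num

end Bernoulli

lemma Finset.exists_sum_sum_eq_sum_of_symmetric {α M : Type*} [LinearOrder α]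
    [AddCommMonoid M] {C D : Finset α} (hCD : Disjoint C D) :
    ∃ F : Finset {x : α × α // x.1 < x.2}, ∀ g : α → α → M, (∀ i j, g i j = g j i) →
      ∑ i ∈ C, ∑ j ∈ D, g i j = ∑ e ∈ F, g e.1.1 e.1.2 := by
  classical
  have hne : ∀ x ∈ C ×ˢ D, x.1 ≠ x.2 := fun x hx h ↦
    disjoint_left.mp hCD (mem_product.mp hx).1 (h ▸ (mem_product.mp hx).2)
  let sort : α × α → α × α := fun x ↦ (min x.1 x.2, max x.1 x.2)
  have hinj : Set.InjOn sort ↑(C ×ˢ D) := by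
    rintro ⟨i, j⟩ hij ⟨k, l⟩ hkl h
    simp only [coe_product, Set.mem_prod, mem_coe] at hij hkl
    simp only [sort, Prod.mk.injEq] at h
    have hCD' := disjoint_left.mp hCD
    rcases le_total i j with h1 | h1 <;> rcases le_total k l with h2 | h2 <;>
      simp_all
  refine ⟨((C ×ˢ D).image sort).subtype (fun x ↦ x.1 < x.2), fun g hg ↦ ?_⟩
  rw [sum_subtype_eq_sum_filter (f := fun x : α × α ↦ g x.1 x.2),
    filter_true_of_mem, sum_image hinj, sum_product]
  · refine sum_congr rfl fun i _ ↦ sum_congr rfl fun j _ ↦ ?_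
    rcases le_total i j with h | h
    · simp [sort, h]
    · simp [sort, h, hg i j]
  · simp only [mem_image, forall_exists_index, and_imp]
    rintro _ x hx rfl
    exact min_lt_max.mpr (hne x hx)

structure IsErdosRenyi {Ω α : Type*} [MeasurableSpace Ω] [LinearOrder α]
    (U : α → α → Ω → ℝ) (p : ℝ) (μ : Measure Ω) : Prop where
  symm : ∀ i j, U i j = U j i
  measurable : ∀ i j, Measurable (U i j)
  measure_eq_one : ∀ i j, i < j → μ {ω | U i j ω = 1} = ENNReal.ofReal p
  measure_eq_zero : ∀ i j, i < j → μ {ω | U i j ω = 0} = ENNReal.ofReal (1 - p)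
  iIndepFun : iIndepFun (fun e : {x : α × α // x.1 < x.2} ↦ U e.1.1 e.1.2) μ

namespace IsErdosRenyi

variable {Ω α : Type*} [MeasurableSpace Ω] {μ : Measure Ω} [IsProbabilityMeasure μ]
  [LinearOrder α] [Fintype α] {U : α → α → Ω → ℝ} {p : ℝ}

lemma measureReal_abs_edgeCount_sub_ge_le (hU : IsErdosRenyi U p μ) (hp0 : 0 ≤ p)
    (hp1 : p ≤ 1) {C D : Finset α} (hCD : Disjoint C D) {t : ℝ} (ht : 0 ≤ t) :
    μ.real {ω | t ≤ |∑ i ∈ C, ∑ j ∈ D, U i j ω - #C * #D * p|} ≤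
      2 * exp (-2 * t ^ 2 / Fintype.card α ^ 2) := by
  obtain ⟨F, hF⟩ := exists_sum_sum_eq_sum_of_symmetric (M := ℝ) hCD
  have hdev : ∀ ω, ∑ i ∈ C, ∑ j ∈ D, U i j ω - #C * #D * p =
      ∑ e ∈ F, (U e.1.1 e.1.2 ω - p) := fun ω ↦ by
    rw [← hF (fun i j ↦ U i j ω - p) fun i j ↦ by rw [hU.symm]]
    simp [sum_sub_distrib, mul_assoc]
  have hsubG : HasSubgaussianMGF (fun ω ↦ ∑ e ∈ F, (U e.1.1 e.1.2 ω - p)) (∑ _e ∈ F, 1 / 4) μ :=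
    HasSubgaussianMGF.sum_of_iIndepFun
      (hU.iIndepFun.comp (fun _ x ↦ x - p) fun _ ↦ measurable_id.sub_const p) fun e _ ↦
      hasSubgaussianMGF_sub_of_bernoulli (hU.measurable _ _) hp0 hp1 (hU.measure_eq_one _ _ e.2)
        (hU.measure_eq_zero _ _ e.2)
  have hcard : ∑ _e ∈ F, (1 / 4 : ℝ≥0) ≤ Fintype.card α ^ 2 / 4 := by
    have : #F ≤ Fintype.card α ^ 2 := calc
      #F ≤ Fintype.card {x : α × α // x.1 < x.2} := card_le_univ F
      _ ≤ Fintype.card (α × α) := Fintype.card_subtype_le _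
      _ = Fintype.card α ^ 2 := by rw [Fintype.card_prod, sq]
    rw [sum_const, nsmul_eq_mul, mul_one_div]
    gcongr
    exact_mod_cast this
  simp_rw [hdev]
  refine ((hsubG.mono hcard).measureReal_abs_ge_le ht).trans_eq ?_
  push_cast
  ring_nf

lemma measureReal_exists_abs_edgeCount_sub_ge_le (hU : IsErdosRenyi U p μ) (hp0 : 0 ≤ p)
    (hp1 : p ≤ 1) {t : ℝ} (ht : 0 ≤ t) :
    μ.real {ω | ∃ C D : Finset α, Disjoint C D ∧
        t ≤ |∑ i ∈ C, ∑ j ∈ D, U i j ω - #C * #D * p|} ≤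
      4 ^ Fintype.card α * (2 * exp (-2 * t ^ 2 / Fintype.card α ^ 2)) := by
  classical
  let pairs := (univ : Finset (Finset α × Finset α)).filter fun q ↦ Disjoint q.1 q.2
  have hpairs : (#pairs : ℝ) ≤ 4 ^ Fintype.card α := by
    have : #pairs ≤ 4 ^ Fintype.card α := calc
      #pairs ≤ Fintype.card (Finset α × Finset α) := card_le_univ _
      _ = 4 ^ Fintype.card α := by
        rw [Fintype.card_prod, Fintype.card_finset, ← mul_pow]; norm_num
    exact_mod_cast this
  calc _ ≤ μ.real (⋃ q ∈ pairs,
          {ω | t ≤ |∑ i ∈ q.1, ∑ j ∈ q.2, U i j ω - #q.1 * #q.2 * p|}) := by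
        refine measureReal_mono (fun ω ⟨C, D, hCD, hω⟩ ↦ Set.mem_iUnion₂.mpr ⟨(C, D), ?_, hω⟩)
          (measure_ne_top μ _)
        simpa [pairs] using hCD
    _ ≤ ∑ q ∈ pairs, μ.real {ω | t ≤ |∑ i ∈ q.1, ∑ j ∈ q.2, U i j ω - #q.1 * #q.2 * p|} :=
        measureReal_biUnion_finset_le _ _
    _ ≤ ∑ _q ∈ pairs, 2 * exp (-2 * t ^ 2 / Fintype.card α ^ 2) :=
        sum_le_sum fun q hq ↦ hU.measureReal_abs_edgeCount_sub_ge_le hp0 hp1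
          (mem_filter.mp hq).2 ht
    _ ≤ _ := by
        rw [sum_const, nsmul_eq_mul]
        gcongr

end IsErdosRenyi

lemma tendsto_pow_mul_exp_neg_mul_sq_nhds_zero {b a : ℝ} (hb : 0 < b) (ha : 0 < a) :
    Tendsto (fun n : ℕ ↦ b ^ n * exp (-(a * n ^ 2))) atTop (nhds 0) := by
  have hexp : ∀ n : ℕ, b ^ n * exp (-(a * n ^ 2)) = exp (n * (log b - a * n)) := fun n ↦ by
    rw [← rpow_natCast, rpow_def_of_pos hb, ← exp_add]
    ring_nf
  simp_rw [hexp]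
  refine tendsto_exp_atBot.comp (tendsto_natCast_atTop_atTop.atTop_mul_atBot₀ ?_)
  exact tendsto_atBot_add_const_left _ _
    (tendsto_neg_atTop_atBot.comp (tendsto_natCast_atTop_atTop.const_mul_atTop ha))

theorem erdos_renyi_edge_count_lln_general
    (p c d : ℝ) (hp : p ∈ Set.Ioo (0 : ℝ) 1)
    (Ω : ℕ → Type) [∀ n, MeasurableSpace (Ω n)]
    (P : ∀ n, Measure (Ω n)) [∀ n, IsProbabilityMeasure (P n)]
    (U : ∀ n, Fin n → Fin n → Ω n → ℝ)
    (hsymm : ∀ n (i j : Fin n), U n i j = U n j i)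
    (hmeas : ∀ n (i j : Fin n), Measurable (U n i j))
    (hBern1 : ∀ n, ∀ i j : Fin n, i < j →
      P n {ω | U n i j ω = 1} = ENNReal.ofReal p)
    (hBern0 : ∀ n, ∀ i j : Fin n, i < j →
      P n {ω | U n i j ω = 0} = ENNReal.ofReal (1 - p))
    (hindep : ∀ n, iIndepFun
      (fun (e : {x : Fin n × Fin n // x.1 < x.2}) => U n e.1.1 e.1.2) (P n)) :
    ∀ ε > (0 : ℝ),
      Tendsto (fun n => P n {ω | ∃ C D : Finset (Fin n), Disjoint C D ∧
          c * n ≤ (C.card : ℝ) ∧ d * n ≤ (D.card : ℝ) ∧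
          ε * (n : ℝ) ^ 2 ≤
            |(∑ i ∈ C, ∑ j ∈ D, U n i j ω)
              - (C.card : ℝ) * (D.card : ℝ) * p|})
        atTop (nhds 0) := by
  intro ε hε
  have hbound : ∀ n : ℕ, (P n).real {ω | ∃ C D : Finset (Fin n), Disjoint C D ∧
      c * n ≤ (#C : ℝ) ∧ d * n ≤ (#D : ℝ) ∧
      ε * (n : ℝ) ^ 2 ≤ |∑ i ∈ C, ∑ j ∈ D, U n i j ω - #C * #D * p|} ≤
      2 * (4 ^ n * exp (-(2 * ε ^ 2 * n ^ 2))) := fun n ↦ by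
    have hexp : -2 * (ε * n ^ 2) ^ 2 / n ^ 2 = -(2 * ε ^ 2 * n ^ 2) := by
      rcases eq_or_ne (n : ℝ) 0 with hn | hn
      · simp [hn]
      · field_simp
    refine (measureReal_mono ?_ (measure_ne_top _ _)).trans
      ((IsErdosRenyi.measureReal_exists_abs_edgeCount_sub_ge_le
        ⟨hsymm n, hmeas n, hBern1 n, hBern0 n, hindep n⟩ hp.1.le hp.2.le (t := ε * n ^ 2)
        (by positivity)).trans_eq ?_)
    · exact fun ω ⟨C, D, hCD, _, _, hω⟩ ↦ ⟨C, D, hCD, hω⟩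
    · rw [Fintype.card_fin, hexp]
      ring
  have hlim := (tendsto_pow_mul_exp_neg_mul_sq_nhds_zero four_pos
    (by positivity : 0 < 2 * ε ^ 2)).const_mul 2
  rw [mul_zero] at hlim
  rw [← ENNReal.ofReal_zero]
  exact (ENNReal.tendsto_ofReal (squeeze_zero (fun _ ↦ measureReal_nonneg) hbound hlim)).congr
    fun n ↦ ofReal_measureReal (measure_ne_top _ _)

theorem erdos_renyi_edge_count_lln
    (p c d : ℝ) (hp : p ∈ Set.Ioo (0 : ℝ) 1) (hc : 0 < c) (hd : 0 < d)
    (hcd : c + d ≤ 1)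
    (Ω : ℕ → Type) [∀ n, MeasurableSpace (Ω n)]
    (P : ∀ n, Measure (Ω n)) [∀ n, IsProbabilityMeasure (P n)]
    (U : ∀ n, Fin n → Fin n → Ω n → ℝ)
    (hsymm : ∀ n (i j : Fin n), U n i j = U n j i)
    (hmeas : ∀ n (i j : Fin n), Measurable (U n i j))
    (hBern1 : ∀ n, ∀ i j : Fin n, i < j →
      P n {ω | U n i j ω = 1} = ENNReal.ofReal p)
    (hBern0 : ∀ n, ∀ i j : Fin n, i < j →
      P n {ω | U n i j ω = 0} = ENNReal.ofReal (1 - p))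
    (hindep : ∀ n, iIndepFun
      (fun (e : {x : Fin n × Fin n // x.1 < x.2}) => U n e.1.1 e.1.2) (P n)) :
    ∀ ε > (0 : ℝ),
      Tendsto (fun n => P n {ω | ∃ C D : Finset (Fin n), Disjoint C D ∧
          c * n ≤ (C.card : ℝ) ∧ d * n ≤ (D.card : ℝ) ∧
          ε * (n : ℝ) ^ 2 ≤
            |(∑ i ∈ C, ∑ j ∈ D, U n i j ω)
              - (C.card : ℝ) * (D.card : ℝ) * p|})
        atTop (nhds 0) :=
  erdos_renyi_edge_count_lln_general p c d hp Ω P U hsymm hmeas hBern1 hBern0 hindep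
end

section
/- Let K ≥ 1, q₁,…,q_K ∈ [0,M₁], μ₁,…,μ_K > 0 with Σ_{j=1}^K μ_j = 1, θ ∈ (0,1), p ∈ (0,1), λ > 0. Suppose (s(·,1),…,s(·,K), v) : [0,S] → ℝ^{K+1} is differentiable, satisfies s'(u,i) = −pλ v(u) q_i s(u,i) for 1 ≤ i ≤ K and v'(u) = −v(u) + pλ v(u) Σ_{i=1}^K q_i² s(u,i), with s(0,i) = (1−θ)μ_i and v(0) = θ Σ_{i=1}^K q_i μ_i, and that v(u) > 0 for all u ∈ [0,S]. Suppose A : [0,T] → [0,S] is differentiable with A(0) = 0 and A'(t) = 1/v(A(t)) for all t ∈ [0,T]. Then for every t ∈ [0,T] and 1 ≤ i ≤ K: s(A(t), i) = (1−θ) μ_i e^{−pλ q_i t} and v(A(t)) = Σ_{j=1}^K μ_j q_j − t − (1−θ) Σ_{j=1}^K μ_j q_j e^{−pλ q_j t}. -/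
/-!
The time change `A' = 1/v(A)` cancels the factor `v` in the `s`-equations, which become the
decoupled linear equations `(s ∘ A)' = -pλ q_i (s ∘ A)`, solved by exponentials. Substituting
these into the `v`-equation, whose time-changed form is `(v ∘ A)' = -1 + pλ Σ q_i² (s ∘ A)`,
leaves a right-hand side depending on `t` alone, so `v ∘ A` is obtained by integration.
-/

open Set Real

theorem eqOn_Icc_of_hasDerivAt_eq {f g f' : ℝ → ℝ} {a b : ℝ}
    (hf : ∀ t ∈ Icc a b, HasDerivAt f (f' t) t) (hg : ∀ t ∈ Icc a b, HasDerivAt g (f' t) t)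
    (hfg : f a = g a) : ∀ t ∈ Icc a b, f t = g t :=
  eq_of_has_deriv_right_eq
    (fun t ht => (hf t (Ico_subset_Icc_self ht)).hasDerivWithinAt)
    (fun t ht => (hg t (Ico_subset_Icc_self ht)).hasDerivWithinAt)
    (fun t ht => (hf t ht).continuousAt.continuousWithinAt)
    (fun t ht => (hg t ht).continuousAt.continuousWithinAt) hfg

theorem eq_mul_exp_of_hasDerivAt_const_mul {f : ℝ → ℝ} {c a b : ℝ}
    (hf : ∀ t ∈ Icc a b, HasDerivAt f (c * f t) t) :
    ∀ t ∈ Icc a b, f t = f a * exp (c * (t - a)) := by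
  have hexp : ∀ t, HasDerivAt (fun t => exp (-(c * (t - a)))) (exp (-(c * (t - a))) * -c) t :=
    fun t => by simpa using (((hasDerivAt_id t).sub_const a).const_mul c).neg.exp
  have hconst : ∀ t ∈ Icc a b, f t * exp (-(c * (t - a))) = f a := by
    refine eqOn_Icc_of_hasDerivAt_eq (f' := fun _ => 0)
      (fun t ht => ((hf t ht).mul (hexp t)).congr_deriv (by ring))
      (fun t _ => hasDerivAt_const t (f a)) (by simp)
  intro t ht
  rw [← hconst t ht, mul_assoc, ← exp_add, neg_add_cancel, exp_zero, mul_one]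

theorem hasDerivAt_sum_mul_exp {ι : Type*} (J : Finset ι) (a b : ι → ℝ) (t : ℝ) :
    HasDerivAt (fun t => ∑ j ∈ J, a j * exp (b j * t)) (∑ j ∈ J, a j * b j * exp (b j * t)) t :=
  HasDerivAt.fun_sum fun j _ =>
    ((((hasDerivAt_id' t).const_mul (b j)).exp).const_mul (a j)).congr_deriv (by ring)

theorem HasDerivAt.comp_of_hasDerivAt_one_div {F A : ℝ → ℝ} {F' w t : ℝ}
    (hF : HasDerivAt F F' (A t)) (hA : HasDerivAt A (1 / w) t) (hw : w ≠ 0) :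
    HasDerivAt (fun t => F (A t)) (F' / w) t :=
  (hF.comp t hA).congr_deriv (by field_simp)

section TimeChange

variable {K : ℕ} {q : Fin K → ℝ} {κ S T : ℝ} {s : ℝ → Fin K → ℝ} {v A : ℝ → ℝ}

theorem hasDerivAt_timeChanged_s
    (hs' : ∀ u ∈ Icc 0 S, ∀ i, HasDerivAt (fun w => s w i) (-κ * v u * q i * s u i) u)
    (hvpos : ∀ u ∈ Icc 0 S, 0 < v u) (hAmem : ∀ t ∈ Icc 0 T, A t ∈ Icc 0 S)
    (hA' : ∀ t ∈ Icc 0 T, HasDerivAt A (1 / v (A t)) t) (i : Fin K) :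
    ∀ t ∈ Icc 0 T, HasDerivAt (fun t => s (A t) i) (-κ * q i * s (A t) i) t := fun t ht =>
  have hv := (hvpos _ (hAmem t ht)).ne'
  ((hs' _ (hAmem t ht) i).comp_of_hasDerivAt_one_div (hA' t ht) hv).congr_deriv (by field_simp)

theorem hasDerivAt_timeChanged_v
    (hv' : ∀ u ∈ Icc 0 S, HasDerivAt v (-v u + κ * v u * ∑ i, q i ^ 2 * s u i) u)
    (hvpos : ∀ u ∈ Icc 0 S, 0 < v u) (hAmem : ∀ t ∈ Icc 0 T, A t ∈ Icc 0 S)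
    (hA' : ∀ t ∈ Icc 0 T, HasDerivAt A (1 / v (A t)) t) :
    ∀ t ∈ Icc 0 T, HasDerivAt (fun t => v (A t)) (-1 + κ * ∑ i, q i ^ 2 * s (A t) i) t :=
  fun t ht =>
  have hv := (hvpos _ (hAmem t ht)).ne'
  ((hv' _ (hAmem t ht)).comp_of_hasDerivAt_one_div (hA' t ht) hv).congr_deriv (by field_simp)

end TimeChange

theorem time_changed_system_explicit_solution_general
    (K : ℕ)
    (q μ : Fin K → ℝ)
    (θ p lam : ℝ)
    (S T : ℝ)
    (s : ℝ → Fin K → ℝ) (v : ℝ → ℝ)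
    (hs' : ∀ u ∈ Set.Icc 0 S, ∀ i,
      HasDerivAt (fun w => s w i) (-(p * lam) * v u * q i * s u i) u)
    (hv' : ∀ u ∈ Set.Icc 0 S,
      HasDerivAt v (-v u + p * lam * v u * ∑ i, (q i) ^ 2 * s u i) u)
    (hs0 : ∀ i, s 0 i = (1 - θ) * μ i)
    (hv0 : v 0 = θ * ∑ i, q i * μ i)
    (hvpos : ∀ u ∈ Set.Icc 0 S, 0 < v u)
    (A : ℝ → ℝ)
    (hAmem : ∀ t ∈ Set.Icc 0 T, A t ∈ Set.Icc 0 S)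
    (hA0 : A 0 = 0)
    (hA' : ∀ t ∈ Set.Icc 0 T, HasDerivAt A (1 / v (A t)) t) :
    ∀ t ∈ Set.Icc 0 T,
      (∀ i, s (A t) i = (1 - θ) * μ i * Real.exp (-(p * lam) * q i * t)) ∧
      v (A t) = (∑ j, μ j * q j) - t
        - (1 - θ) * ∑ j, μ j * q j * Real.exp (-(p * lam) * q j * t) := by
  have hs : ∀ t ∈ Icc 0 T, ∀ i, s (A t) i = (1 - θ) * μ i * exp (-(p * lam) * q i * t) :=
    fun t ht i => by
      rw [eq_mul_exp_of_hasDerivAt_const_mul (hasDerivAt_timeChanged_s hs' hvpos hAmem hA' i) t ht,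
        hA0, hs0, sub_zero, mul_assoc (-(p * lam))]
  have hV : ∀ t, HasDerivAt
      (fun t => (∑ j, μ j * q j) - t - (1 - θ) * ∑ j, μ j * q j * exp (-(p * lam) * q j * t))
      (-1 - (1 - θ) * ∑ j, μ j * q j * (-(p * lam) * q j) * exp (-(p * lam) * q j * t)) t :=
    fun t => (((hasDerivAt_const t _).fun_sub (hasDerivAt_id' t)).fun_sub
      ((hasDerivAt_sum_mul_exp Finset.univ _ (fun j => -(p * lam) * q j) t).const_mul
        (1 - θ))).congr_deriv (by ring)
  refine fun t ht => ⟨hs t ht, eqOn_Icc_of_hasDerivAt_eq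
    (fun t ht => (hasDerivAt_timeChanged_v hv' hvpos hAmem hA' t ht).congr_deriv ?_)
    (fun t _ => hV t) ?_ t ht⟩
  · simp only [hs t ht, Finset.mul_sum, ← Finset.sum_neg_distrib, sub_eq_add_neg]
    exact congrArg _ (Finset.sum_congr rfl fun j _ => by ring)
  · simp only [hA0, hv0, mul_zero, exp_zero, mul_one, sub_zero, Finset.mul_sum,
      ← Finset.sum_sub_distrib]
    exact Finset.sum_congr rfl fun j _ => by ring

theorem time_changed_system_explicit_solution
    (K : ℕ) (hK : 1 ≤ K) (M₁ : ℝ)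
    (q μ : Fin K → ℝ) (hq : ∀ j, q j ∈ Set.Icc (0 : ℝ) M₁)
    (hμ : ∀ j, 0 < μ j) (hμsum : ∑ j, μ j = 1)
    (θ p lam : ℝ) (hθ : θ ∈ Set.Ioo (0 : ℝ) 1) (hp : p ∈ Set.Ioo (0 : ℝ) 1)
    (hlam : 0 < lam)
    (S T : ℝ) (hS : 0 ≤ S) (hT : 0 ≤ T)
    (s : ℝ → Fin K → ℝ) (v : ℝ → ℝ)
    (hs' : ∀ u ∈ Set.Icc 0 S, ∀ i,
      HasDerivAt (fun w => s w i) (-(p * lam) * v u * q i * s u i) u)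
    (hv' : ∀ u ∈ Set.Icc 0 S,
      HasDerivAt v (-v u + p * lam * v u * ∑ i, (q i) ^ 2 * s u i) u)
    (hs0 : ∀ i, s 0 i = (1 - θ) * μ i)
    (hv0 : v 0 = θ * ∑ i, q i * μ i)
    (hvpos : ∀ u ∈ Set.Icc 0 S, 0 < v u)
    (A : ℝ → ℝ)
    (hAmem : ∀ t ∈ Set.Icc 0 T, A t ∈ Set.Icc 0 S)
    (hA0 : A 0 = 0)
    (hA' : ∀ t ∈ Set.Icc 0 T, HasDerivAt A (1 / v (A t)) t) :
    ∀ t ∈ Set.Icc 0 T,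
      (∀ i, s (A t) i = (1 - θ) * μ i * Real.exp (-(p * lam) * q i * t)) ∧
      v (A t) = (∑ j, μ j * q j) - t
        - (1 - θ) * ∑ j, μ j * q j * Real.exp (-(p * lam) * q j * t) :=
  time_changed_system_explicit_solution_general K q μ θ p lam S T s v hs' hv' hs0 hv0 hvpos A hAmem
    hA0 hA'
end

section
/- Let K ≥ 1, q₁,…,q_K ∈ [0,M₁], μ₁,…,μ_K > 0 with Σ_{j=1}^K μ_j = 1, θ ∈ (0,1), p ∈ (0,1), λ > 0, and set H_V(x) = Σ_{j=1}^K μ_j q_j − (1−θ)Σ_{j=1}^K μ_j q_j x^{q_j} + (log x)/(pλ) for x > 0. Suppose ψ : [0,T] → (0,∞) is differentiable with ψ(0) = 1 and ψ'(t) = −pλ ψ(t) H_V(ψ(t)) for all t ∈ [0,T]. Define s(t,i) = (1−θ) μ_i ψ(t)^{q_i} for 1 ≤ i ≤ K and v(t) = H_V(ψ(t)). Then s(0,i) = (1−θ)μ_i, v(0) = θ Σ_{i=1}^K q_i μ_i, and for all t ∈ [0,T]: s'(t,i) = −pλ v(t) q_i s(t,i) for each 1 ≤ i ≤ K, and v'(t)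 = −v(t) + pλ v(t) Σ_{i=1}^K q_i² s(t,i). -/
/-!
Write the ODE as `ψ' = g ψ` with `g = -pλ v`. Then `ψ ^ r` has logarithmic derivative `r g` and
`log ψ` has derivative `g`, which gives `s_i' = q_i g s_i` at once, and differentiating `H_V(ψ)`
termwise gives `v' = g / (pλ) - (1 - θ) g Σ q_j² μ_j ψ^{q_j} = -v + pλ v Σ q_j² s_j`.
-/

open Topology

section LogarithmicDerivative

variable {ψ : ℝ → ℝ} {g t : ℝ}

theorem HasDerivAt.rpow_const_of_mul_self (hψ : HasDerivAt ψ (g * ψ t) t) (ht : 0 < ψ t)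
    (r : ℝ) : HasDerivAt (fun u => ψ u ^ r) (r * g * ψ t ^ r) t := by
  refine (hψ.rpow_const (Or.inl ht.ne')).congr_deriv ?_
  have hsucc : ψ t ^ (r - 1) * ψ t = ψ t ^ r := by
    rw [← Real.rpow_add_one ht.ne', sub_add_cancel]
  rw [← hsucc]
  ring

theorem HasDerivAt.log_of_mul_self (hψ : HasDerivAt ψ (g * ψ t) t) (ht : 0 < ψ t) :
    HasDerivAt (fun u => Real.log (ψ u)) g t :=
  (hψ.log ht.ne').congr_deriv (mul_div_cancel_right₀ g ht.ne')

end LogarithmicDerivative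

/-- The function `H_V` of the paper, with `κ = pλ`. -/
noncomputable def hV {K : ℕ} (μ q : Fin K → ℝ) (θ κ x : ℝ) : ℝ :=
  (∑ j, μ j * q j) - (1 - θ) * (∑ j, μ j * q j * x ^ (q j)) + Real.log x / κ

section PotentialHV

variable {K : ℕ} (μ q : Fin K → ℝ) (θ κ : ℝ)

theorem hV_one : hV μ q θ κ 1 = θ * ∑ j, q j * μ j := by
  simp only [hV, Real.one_rpow, mul_one, Real.log_one, zero_div, add_zero]
  rw [Finset.mul_sum, Finset.mul_sum, ← Finset.sum_sub_distrib]
  exact Finset.sum_congr rfl fun j _ => by ring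

theorem HasDerivAt.hV_comp {ψ : ℝ → ℝ} {g t : ℝ} (hψ : HasDerivAt ψ (g * ψ t) t)
    (ht : 0 < ψ t) :
    HasDerivAt (fun u => hV μ q θ κ (ψ u))
      (g / κ - (1 - θ) * g * ∑ j, q j ^ 2 * (μ j * ψ t ^ (q j))) t := by
  have hsum : HasDerivAt (fun u => ∑ j, μ j * q j * ψ u ^ (q j))
      (∑ j, μ j * q j * (q j * g * ψ t ^ (q j))) t :=
    HasDerivAt.fun_sum fun j _ => (hψ.rpow_const_of_mul_self ht (q j)).const_mul _
  refine (((hasDerivAt_const t _).sub (hsum.const_mul (1 - θ))).add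
    ((hψ.log_of_mul_self ht).div_const κ)).congr_deriv ?_
  have hterms : ∑ j, μ j * q j * (q j * g * ψ t ^ (q j)) =
      g * ∑ j, q j ^ 2 * (μ j * ψ t ^ (q j)) := by
    rw [Finset.mul_sum]
    exact Finset.sum_congr rfl fun j _ => by ring
  rw [hterms]
  ring

end PotentialHV

theorem psi_solution_solves_limit_system_general
    (K : ℕ)
    (q μ : Fin K → ℝ)
    (θ p lam : ℝ) (hp : p ∈ Set.Ioo (0 : ℝ) 1)
    (hlam : 0 < lam)
    (HV : ℝ → ℝ)
    (hHV : ∀ x > (0 : ℝ), HV x =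
      (∑ j, μ j * q j) - (1 - θ) * (∑ j, μ j * q j * x ^ (q j))
        + Real.log x / (p * lam))
    (T : ℝ)
    (ψ : ℝ → ℝ) (hψpos : ∀ t ∈ Set.Icc 0 T, 0 < ψ t) (hψ0 : ψ 0 = 1)
    (hψ' : ∀ t ∈ Set.Icc 0 T,
      HasDerivAt ψ (-(p * lam) * ψ t * HV (ψ t)) t)
    (s : ℝ → Fin K → ℝ) (v : ℝ → ℝ)
    (hs : ∀ t i, s t i = (1 - θ) * μ i * ψ t ^ (q i))
    (hv : ∀ t, v t = HV (ψ t)) :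
    (∀ i, s 0 i = (1 - θ) * μ i) ∧
    v 0 = θ * ∑ i, q i * μ i ∧
    (∀ t ∈ Set.Icc 0 T, ∀ i,
      HasDerivAt (fun u => s u i) (-(p * lam) * v t * q i * s t i) t) ∧
    (∀ t ∈ Set.Icc 0 T,
      HasDerivAt v (-v t + p * lam * v t * ∑ i, (q i) ^ 2 * s t i) t) := by
  have hκ : p * lam ≠ 0 := (mul_pos hp.1 hlam).ne'
  have hHV_eq : ∀ x > (0 : ℝ), HV x = hV μ q θ (p * lam) x := hHV
  have hψ_log : ∀ t ∈ Set.Icc 0 T, HasDerivAt ψ (-(p * lam) * v t * ψ t) t := fun t ht =>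
    (hψ' t ht).congr_deriv (by rw [hv]; ring)
  refine ⟨fun i => by rw [hs, hψ0, Real.one_rpow, mul_one], ?_,
    fun t ht i => ?_, fun t ht => ?_⟩
  · rw [hv, hψ0, hHV_eq 1 one_pos, hV_one]
  · simp_rw [hs]
    exact (((hψ_log t ht).rpow_const_of_mul_self (hψpos t ht) (q i)).const_mul _).congr_deriv
      (by ring)
  · have hv_eq : v =ᶠ[𝓝 t] fun u => hV μ q θ (p * lam) (ψ u) := by
      filter_upwards [(hψ_log t ht).continuousAt.preimage_mem_nhds (Ioi_mem_nhds (hψpos t ht))]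
        with u hu
      rw [hv, hHV_eq _ hu]
    refine (((hψ_log t ht).hV_comp μ q θ (p * lam) (hψpos t ht)).congr_of_eventuallyEq
      hv_eq).congr_deriv ?_
    have hsum : ∑ i, q i ^ 2 * s t i = (1 - θ) * ∑ j, q j ^ 2 * (μ j * ψ t ^ q j) := by
      rw [Finset.mul_sum]
      exact Finset.sum_congr rfl fun j _ => by rw [hs]; ring
    rw [hsum, neg_mul, neg_div, mul_div_cancel_left₀ _ hκ]
    ring

theorem psi_solution_solves_limit_system
    (K : ℕ) (hK : 1 ≤ K) (M₁ : ℝ)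
    (q μ : Fin K → ℝ) (hq : ∀ j, q j ∈ Set.Icc (0 : ℝ) M₁)
    (hμ : ∀ j, 0 < μ j) (hμsum : ∑ j, μ j = 1)
    (θ p lam : ℝ) (hθ : θ ∈ Set.Ioo (0 : ℝ) 1) (hp : p ∈ Set.Ioo (0 : ℝ) 1)
    (hlam : 0 < lam)
    (HV : ℝ → ℝ)
    (hHV : ∀ x > (0 : ℝ), HV x =
      (∑ j, μ j * q j) - (1 - θ) * (∑ j, μ j * q j * x ^ (q j))
        + Real.log x / (p * lam))
    (T : ℝ) (hT : 0 ≤ T)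
    (ψ : ℝ → ℝ) (hψpos : ∀ t ∈ Set.Icc 0 T, 0 < ψ t) (hψ0 : ψ 0 = 1)
    (hψ' : ∀ t ∈ Set.Icc 0 T,
      HasDerivAt ψ (-(p * lam) * ψ t * HV (ψ t)) t)
    (s : ℝ → Fin K → ℝ) (v : ℝ → ℝ)
    (hs : ∀ t i, s t i = (1 - θ) * μ i * ψ t ^ (q i))
    (hv : ∀ t, v t = HV (ψ t)) :
    (∀ i, s 0 i = (1 - θ) * μ i) ∧
    v 0 = θ * ∑ i, q i * μ i ∧
    (∀ t ∈ Set.Icc 0 T, ∀ i,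
      HasDerivAt (fun u => s u i) (-(p * lam) * v t * q i * s t i) t) ∧
    (∀ t ∈ Set.Icc 0 T,
      HasDerivAt v (-v t + p * lam * v t * ∑ i, (q i) ^ 2 * s t i) t) :=
  psi_solution_solves_limit_system_general K q μ θ p lam hp hlam HV hHV T ψ hψpos hψ0 hψ' s v hs hv
end
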